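/- If u is a Δ-primitive element of the free metabelian group M_n (i.e., its abelianized Fox derivatives generate the augmentation ideal Δ of Z[Z^n]), then u lies in the commutator subgroup M_n'. -/

import Mathlib

/-!
Abelianizing the Fox expansion `u - 1 = ∑ⱼ ∂ⱼu (xⱼ - 1)` gives `ū - 1 = ∑ⱼ eⱼ (xⱼ - 1)` in
`ℤ[ℤⁿ]` with every `eⱼ ∈ Δ`, so `ū - 1 ∈ Δ²`. For an abelian group `G` with augmentation `ε`,
the `ℤ`-linear map `D : ℤ[G] → G` sending each group element to itself (`toAdditiveSum`)
satisfies `D (a * b) = ε a • D b + ε b • D a`, hence kills `Δ²`, while `D (g - 1) = g`.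
Thus `ū = 1`, i.e. `u` lies in the commutator subgroup.
-/

/-- The augmentation homomorphism `ZF → Z`. -/
noncomputable def aug (n : ℕ) :
    MonoidAlgebra ℤ (FreeGroup (Fin n)) →ₐ[ℤ] ℤ :=
  MonoidAlgebra.lift ℤ ℤ (FreeGroup (Fin n)) 1

/-- The abelianization map `F_n →* Z^n`. -/
noncomputable def abel (n : ℕ) : FreeGroup (Fin n) →* Multiplicative (Fin n → ℤ) :=
  FreeGroup.lift fun i => Multiplicative.ofAdd (Pi.single i 1)

/-- The induced ring homomorphism `ZF → Z[Z^n]`. -/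
noncomputable def abelRing (n : ℕ) :
    MonoidAlgebra ℤ (FreeGroup (Fin n)) →+*
      MonoidAlgebra ℤ (Multiplicative (Fin n → ℤ)) :=
  MonoidAlgebra.mapDomainRingHom ℤ (abel n)

/-- The augmentation homomorphism `Z[Z^n] → Z`. -/
noncomputable def augA (n : ℕ) :
    MonoidAlgebra ℤ (Multiplicative (Fin n → ℤ)) →ₐ[ℤ] ℤ :=
  MonoidAlgebra.lift ℤ ℤ (Multiplicative (Fin n → ℤ)) 1

open MonoidAlgebra

section AugmentationQuotient

variable {G : Type*} [CommGroup G]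

noncomputable def toAdditiveSum : MonoidAlgebra ℤ G →ₗ[ℤ] Additive G :=
  Finsupp.linearCombination ℤ Additive.ofMul ∘ₗ (coeffLinearEquiv ℤ).toLinearMap

@[simp]
lemma toAdditiveSum_single (g : G) (c : ℤ) :
    toAdditiveSum (single g c) = c • Additive.ofMul g :=
  Finsupp.linearCombination_single ℤ c g

lemma toAdditiveSum_mul (a b : MonoidAlgebra ℤ G) :
    toAdditiveSum (a * b) =
      lift ℤ ℤ G 1 a • toAdditiveSum b + lift ℤ ℤ G 1 b • toAdditiveSum a := by
  induction a using MonoidAlgebra.induction_linear with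
  | zero => simp
  | add a a' ha ha' => simp only [add_mul, map_add, ha, ha', add_smul, smul_add]; abel
  | single g c =>
    induction b using MonoidAlgebra.induction_linear with
    | zero => simp
    | add b b' hb hb' => simp only [mul_add, map_add, hb, hb', add_smul, smul_add]; abel
    | single h c' =>
      simp only [single_mul_single, toAdditiveSum_single, lift_single, ofMul_mul, smul_add,
        MonoidHom.one_apply, smul_eq_mul, mul_one, mul_smul]
      rw [smul_comm c' c, add_comm]

lemma toAdditiveSum_eq_zero_of_mem_ker_mul {x : MonoidAlgebra ℤ G}
    (hx : x ∈ RingHom.ker (lift ℤ ℤ G 1).toRingHom * RingHom.ker (lift ℤ ℤ G 1).toRingHom) :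
    toAdditiveSum x = 0 := by
  refine Submodule.mul_induction_on hx (fun a ha b hb => ?_) (fun x y hx hy => ?_)
  · rw [toAdditiveSum_mul, show lift ℤ ℤ G 1 a = 0 from ha, show lift ℤ ℤ G 1 b = 0 from hb,
      zero_smul, zero_smul, add_zero]
  · rw [map_add, hx, hy, add_zero]

lemma of_sub_one_mem_ker (g : G) : of ℤ G g - 1 ∈ RingHom.ker (lift ℤ ℤ G 1).toRingHom := by
  simp [RingHom.mem_ker]

lemma eq_one_of_of_sub_one_mem_ker_mul {g : G}
    (hg : of ℤ G g - 1 ∈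
      RingHom.ker (lift ℤ ℤ G 1).toRingHom * RingHom.ker (lift ℤ ℤ G 1).toRingHom) :
    g = 1 := by
  have h := toAdditiveSum_eq_zero_of_mem_ker_mul hg
  rw [map_sub, of_apply, one_def, toAdditiveSum_single, toAdditiveSum_single] at h
  simpa using h

end AugmentationQuotient

lemma abelRing_of (n : ℕ) (w : FreeGroup (Fin n)) :
    abelRing n (of ℤ _ w) = of ℤ _ (abel n w) := by
  simp [abelRing, of_apply]

lemma aug_of (n : ℕ) (w : FreeGroup (Fin n)) : aug n (of ℤ _ w) = 1 := by
  simp [aug]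

noncomputable def abelianizationOfExponents (n : ℕ) :
    Multiplicative (Fin n → ℤ) →* Abelianization (FreeGroup (Fin n)) where
  toFun m := ∏ i, Abelianization.of (FreeGroup.of i) ^ m.toAdd i
  map_one' := by simp
  map_mul' a b := by simp only [toAdd_mul, Pi.add_apply, zpow_add, Finset.prod_mul_distrib]

lemma abelianizationOfExponents_comp_abel (n : ℕ) :
    (abelianizationOfExponents n).comp (abel n) = Abelianization.of := by
  refine FreeGroup.ext_hom _ _ fun i => ?_
  simp only [MonoidHom.comp_apply, abel, FreeGroup.lift_apply_of]
  show ∏ j, Abelianization.of (FreeGroup.of j) ^ (Pi.single i 1 : Fin n → ℤ) j = _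
  rw [Fintype.prod_eq_single i fun j hj => by simp [Pi.single_eq_of_ne hj]]
  simp

lemma mem_commutator_of_abel_eq_one {n : ℕ} {u : FreeGroup (Fin n)} (hu : abel n u = 1) :
    u ∈ commutator (FreeGroup (Fin n)) := by
  rw [← Abelianization.ker_of, MonoidHom.mem_ker, ← abelianizationOfExponents_comp_abel,
    MonoidHom.comp_apply, hu, map_one]

/-- If `u` is a `Δ`-primitive element of the free metabelian group `M_n` (its
abelianized Fox derivatives generate the augmentation ideal of `Z[Z^n]`), then `u`
lies in the commutator subgroup `M_n'`; equivalently, a representative `u ∈ F_n` lies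
in the commutator subgroup of `F_n`. -/
theorem stmt16 (n : ℕ)
    (d : MonoidAlgebra ℤ (FreeGroup (Fin n)) → Fin n →
      MonoidAlgebra ℤ (FreeGroup (Fin n)))
    (hd : ∀ a : MonoidAlgebra ℤ (FreeGroup (Fin n)),
      a = algebraMap ℤ (MonoidAlgebra ℤ (FreeGroup (Fin n))) (aug n a) +
        ∑ j : Fin n, d a j *
          (MonoidAlgebra.of ℤ (FreeGroup (Fin n)) (FreeGroup.of j) - 1))
    (u : FreeGroup (Fin n))
    (hu : Ideal.span (Set.range fun i =>
        abelRing n (d (MonoidAlgebra.of ℤ (FreeGroup (Fin n)) u) i)) =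
      RingHom.ker (augA n).toRingHom) :
    u ∈ commutator (FreeGroup (Fin n)) := by
  have hfox : of ℤ _ (abel n u) - 1 =
      ∑ j, abelRing n (d (of ℤ _ u) j) * (of ℤ _ (abel n (FreeGroup.of j)) - 1) := by
    have h := congrArg (abelRing n) (hd (of ℤ _ u))
    simp only [aug_of, map_one, map_add, map_sum, map_mul, map_sub, abelRing_of] at h
    rw [h, add_sub_cancel_left]
  have hderiv (j : Fin n) : abelRing n (d (of ℤ _ u) j) ∈ RingHom.ker (augA n).toRingHom :=
    hu ▸ Ideal.subset_span ⟨j, rfl⟩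
  refine mem_commutator_of_abel_eq_one (eq_one_of_of_sub_one_mem_ker_mul ?_)
  rw [hfox]
  exact Ideal.sum_mem _ fun j _ => Ideal.mul_mem_mul (hderiv j) (of_sub_one_mem_ker _)
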